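/- Let p be a production F(x_1,...,x_m) → t of a context-free tree grammar over Σ∪F, inducing a tree homomorphism p̂ on T(Σ∪F, X) (replacing F by t and keeping all other symbols fixed), and let p̂_D be its lifted simulation on terms over the derived alphabet D(Σ∪F) (defined by mapping the constant F to LIFT_m(t) and fixing all other constants and the substitution/projection operators). Then the diagram commutes: β ∘ p̂_D = p̂ ∘ β as maps from T(D(Σ∪F)) to the tree substitution algebra over Σ∪F. -/

import Mathlib

/-!
Both `β ∘ p̂_D` and `p̂ ∘ β` send substitution operators to actual substitution (a tree
homomorphism commutes with substitution), and both fix projections, so by induction they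
agree as soon as they agree on the symbols. On `F` this is `β (LIFT t) = t`, because `LIFT`
is a right inverse of `β`; on every other symbol both sides give `f(x_1,…,x_n)`.
-/

/-- A single-sorted ranked alphabet: for each rank `n`, a type of operators. -/
def Sig : Type 1 := ℕ → Type

/-- Terms over a ranked alphabet `σ` with variables `x_1, …, x_k`. -/
inductive Tm (σ : Sig) (k : ℕ) : Type where
  | var : Fin k → Tm σ k
  | op : {n : ℕ} → σ n → (Fin n → Tm σ k) → Tm σ k

/-- Simultaneous (first-order) substitution `t[t_1,…,t_m]`. -/
def Tm.subst {σ : Sig} {m k : ℕ} : Tm σ m → (Fin m → Tm σ k) → Tm σ k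
  | .var i, f => f i
  | .op s ts, f => .op s (fun j => (ts j).subst f)

/-- Explicit trees over the derived alphabet `D(σ)`: sort `k` corresponds to
the type `⟨ε,k⟩`.  Constructors: projections `π_i^k`, the symbols of `σ` as
constants, and the substitution/composition operators `S_{n,k}`. -/
inductive DTm (σ : Sig) : ℕ → Type where
  | proj : {k : ℕ} → Fin k → DTm σ k
  | sym : {n : ℕ} → σ n → DTm σ n
  | sub : {n k : ℕ} → DTm σ n → (Fin n → DTm σ k) → DTm σ k

/-- The evaluation homomorphism `β` from the derived term algebra to the tree
substitution algebra: `σ ↦ σ(x_1,…,x_n)`, `π_i^k ↦ x_i`, and substitution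
symbols are interpreted as actual substitution. -/
def DTm.beta {σ : Sig} : {k : ℕ} → DTm σ k → Tm σ k
  | _, .proj i => .var i
  | _, .sym s => .op s (fun i => .var i)
  | _, .sub t ts => (t.beta).subst (fun i => (ts i).beta)

/-- `LIFT_k : T(σ,X_k) → T(D(σ),⟨ε,k⟩)`:  `x_i ↦ π_i^k`,
`σ(t_1,…,t_n) ↦ S_{n,k}(σ, LIFT t_1, …, LIFT t_n)` (for `n = 0` this is
`S_{0,k}(σ)`). -/
def Tm.lift {σ : Sig} {k : ℕ} : Tm σ k → DTm σ k
  | .var i => .proj i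
  | .op s ts => .sub (.sym s) (fun i => (ts i).lift)

/-- Disjoint union of two ranked alphabets (terminals ⊕ nonterminals). -/
def sumSig (σ τ : Sig) : Sig := fun n => σ n ⊕ τ n

/-- Inclusion of terminal trees into trees over the extended alphabet. -/
def Tm.inj {σ τ : Sig} {k : ℕ} : Tm σ k → Tm (sumSig σ τ) k
  | .var i => .var i
  | .op s ts => .op (Sum.inl s) (fun i => (ts i).inj)

/-- Number of occurrences of the variable in a one-variable tree. -/
def Tm.countVar {σ : Sig} : Tm σ 1 → ℕ
  | .var _ => 1
  | .op (n := n) _ ts => ∑ j : Fin n, (ts j).countVar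

/-- A context-free tree grammar: terminals `σ`, nonterminals `τ`, a start
symbol of rank 0, and a set of productions `F(x_1,…,x_m) → t` with
`t ∈ T(σ∪τ, X_m)`. -/
structure CFTG (σ τ : Sig) where
  start : τ 0
  P : Set ((m : ℕ) × τ m × Tm (sumSig σ τ) m)

/-- One inside-out (IO) derivation step: replace an occurrence (in a
one-hole context `c`) of a subtree `F(t_1,…,t_m)`, with all `t_i` terminal
trees, by `rhs[t_1,…,t_m]`. -/
def IOStep {σ τ : Sig} (P : Set ((m : ℕ) × τ m × Tm (sumSig σ τ) m))
    (t t' : Tm (sumSig σ τ) 0) : Prop :=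
  ∃ (m : ℕ) (F : τ m) (rhs : Tm (sumSig σ τ) m),
    (⟨m, F, rhs⟩ : (m : ℕ) × τ m × Tm (sumSig σ τ) m) ∈ P ∧
    ∃ (c : Tm (sumSig σ τ) 1) (args : Fin m → Tm σ 0),
      c.countVar = 1 ∧
      t = c.subst (fun _ => Tm.op (Sum.inr F) (fun i => (args i).inj)) ∧
      t' = c.subst (fun _ => rhs.subst (fun i => (args i).inj))

/-- The inside-out tree language generated by a context-free tree grammar. -/
def IOLang {σ τ : Sig} (G : CFTG σ τ) : Set (Tm σ 0) :=
  {t | Relation.ReflTransGen (IOStep G.P)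
        (Tm.op (Sum.inr G.start) Fin.elim0) t.inj}

/-- The tree homomorphism `ĥ` induced by a family `h_n : σ_n → T(Ω, X_n)`,
extended to trees with variables by `ĥ(x_i) = x_i`. -/
def Tm.hmap {σ Ω : Sig} (h : ∀ n, σ n → Tm Ω n) {k : ℕ} : Tm σ k → Tm Ω k
  | .var i => .var i
  | .op (n := n) s ts => (h n s).subst (fun i => (ts i).hmap h)

/-- The map on explicit (derived) trees induced by a symbol assignment `Q`,
fixing projections and substitution operators. -/
def DTm.dmap {σ : Sig} (Q : ∀ n, σ n → DTm σ n) : {k : ℕ} → DTm σ k → DTm σ k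
  | _, .proj i => .proj i
  | _, .sym (n := n) s => Q n s
  | _, .sub t ts => .sub (t.dmap Q) (fun i => (ts i).dmap Q)

namespace Tm

variable {σ : Sig}

theorem subst_var {k : ℕ} (t : Tm σ k) : t.subst (fun i => .var i) = t := by
  induction t with
  | var i => rfl
  | op s ts ih => simp only [Tm.subst, ih]

theorem subst_subst {a b c : ℕ} (t : Tm σ a) (g : Fin a → Tm σ b) (f : Fin b → Tm σ c) :
    (t.subst g).subst f = t.subst (fun i => (g i).subst f) := by
  induction t with
  | var i => rfl
  | op s ts ih => simp only [Tm.subst, ih]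

theorem hmap_subst {Ω : Sig} (h : ∀ n, σ n → Tm Ω n) {a b : ℕ} (t : Tm σ a)
    (f : Fin a → Tm σ b) : (t.subst f).hmap h = (t.hmap h).subst (fun i => (f i).hmap h) := by
  induction t with
  | var i => rfl
  | op s ts ih => simp only [Tm.subst, Tm.hmap, ih, subst_subst]

theorem hmap_op_var {Ω : Sig} (h : ∀ n, σ n → Tm Ω n) {n : ℕ} (s : σ n) :
    (Tm.op s (fun i => .var i)).hmap h = h n s :=
  subst_var _

theorem beta_lift {k : ℕ} (t : Tm σ k) : t.lift.beta = t := by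
  induction t with
  | var i => rfl
  | op s ts ih => simp only [Tm.lift, DTm.beta, Tm.subst, ih]

end Tm

theorem DTm.beta_dmap {σ : Sig} {P : ∀ n, σ n → Tm σ n} {Q : ∀ n, σ n → DTm σ n}
    (hQP : ∀ n s, (Q n s).beta = P n s) {k : ℕ} (d : DTm σ k) :
    (d.dmap Q).beta = d.beta.hmap P := by
  induction d with
  | proj i => rfl
  | sym s => rw [DTm.dmap, DTm.beta, Tm.hmap_op_var, hQP]
  | sub t ts iht ihts => simp only [DTm.dmap, DTm.beta, iht, ihts, Tm.hmap_subst]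

/-- for a production `p : F(x_1,…,x_m) → t` of a context-free
tree grammar over `Σ∪F`, inducing the tree homomorphism `p̂` (with symbol map
`P`: `P(F) = t` and `P(f) = f(x_1,…,x_n)` for `f ≠ F`) and the lifted
simulation `p̂_D` on terms over the derived alphabet `D(Σ∪F)` (with symbol
map `Q`: `Q(F) = LIFT_m(t)` and `Q(f) = f` for `f ≠ F`, fixing projections
and substitution operators), the diagram commutes: `β ∘ p̂_D = p̂ ∘ β`. -/
theorem lifted_production_commutes {σt τ : Sig} {m : ℕ}
    (F0 : τ m) (t : Tm (sumSig σt τ) m)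
    (P : ∀ n, sumSig σt τ n → Tm (sumSig σt τ) n)
    (hP1 : P m (Sum.inr F0) = t)
    (hP2 : ∀ (n : ℕ) (s : sumSig σt τ n),
      ¬ (∃ _ : n = m, HEq s (Sum.inr F0 : sumSig σt τ m)) →
      P n s = .op s (fun i => .var i))
    (Q : ∀ n, sumSig σt τ n → DTm (sumSig σt τ) n)
    (hQ1 : Q m (Sum.inr F0) = t.lift)
    (hQ2 : ∀ (n : ℕ) (s : sumSig σt τ n),
      ¬ (∃ _ : n = m, HEq s (Sum.inr F0 : sumSig σt τ m)) →
      Q n s = .sym s)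
    {k : ℕ} (d : DTm (sumSig σt τ) k) :
    (d.dmap Q).beta = (d.beta).hmap P := by
  refine DTm.beta_dmap (fun n s => ?_) d
  by_cases hF : ∃ _ : n = m, HEq s (Sum.inr F0 : sumSig σt τ m)
  · obtain ⟨rfl, hs⟩ := hF
    cases eq_of_heq hs
    rw [hQ1, hP1, Tm.beta_lift]
  · rw [hQ2 n s hF, hP2 n s hF, DTm.beta]
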